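/- Let φ : M → ℝ^{k+1} be a C¹ map, B^{k+1} = {p ∈ ℝ^{k+1} : |p| ≤ 1} the closed unit ball, and g : B^{k+1} × M → ℝ, g(p,x) = ⟨p, φ(x)⟩. Then g has a critical point (in the tangent-cone sense) at level 0 if and only if φ⁻¹(0) ≠ ∅. Moreover, for every constant c > 0 the function (p,x) ↦ c + ⟨p, φ(x)⟩ on B^{k+1} × M has no critical point at level 0. -/

import Mathlib

open scoped Manifold RealInnerProductSpace

/-- The tangent cone of a subset `V` of a manifold `X` at a point `z`: the closure of the set of
velocities at `z` of smooth (C¹) curves starting from `z` and contained in `V` (near time `0`). -/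
def mTangentCone {E H : Type*} [NormedAddCommGroup E] [NormedSpace ℝ E]
    [TopologicalSpace H] (I : ModelWithCorners ℝ E H)
    {X : Type*} [TopologicalSpace X] [ChartedSpace H X]
    (V : Set X) (z : X) : Set (TangentSpace I z) :=
  closure {ξ : TangentSpace I z |
    ∃ γ : ℝ → X, γ 0 = z ∧ ContMDiff 𝓘(ℝ, ℝ) I 1 γ ∧
      (∃ ε > 0, ∀ t ∈ Set.Icc (0:ℝ) ε, γ t ∈ V) ∧
      mfderiv 𝓘(ℝ, ℝ) I γ 0 (1 : ℝ) = ξ}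

/-- `z` is a critical point of the `C¹` function `g` on the subset `V` (in the tangent-cone
sense) if `⟨d_z g, ξ⟩ ≤ 0` for every `ξ` in the tangent cone of `V` at `z`. -/
def IsMCriticalPt {E H : Type*} [NormedAddCommGroup E] [NormedSpace ℝ E]
    [TopologicalSpace H] (I : ModelWithCorners ℝ E H)
    {X : Type*} [TopologicalSpace X] [ChartedSpace H X]
    (g : X → ℝ) (V : Set X) (z : X) : Prop :=
  ∀ ξ ∈ mTangentCone I V z, LE.le (α := ℝ) (mfderiv I 𝓘(ℝ, ℝ) g z ξ) 0

/-!
Only the ball coordinate needs to move: for `q` in the ball, `t ↦ (p + t • (q - p), x)` is an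
admissible curve, so at a critical point `(p, x)` of `c + ⟪p, φ x⟫` the point `p` maximizes
`⟪·, φ x⟫` over the unit ball, i.e. `‖φ x‖ ≤ ⟪p, φ x⟫ = -c` at level `0`. This forces `φ x = 0`
when `c = 0` and is impossible when `c > 0`. Conversely, if `φ x = 0` then the differential of
`(p, x) ↦ ⟪p, φ x⟫` vanishes at `(0, x)`, being bilinear in two factors that both vanish there.
-/

section

variable {E H : Type*} [NormedAddCommGroup E] [NormedSpace ℝ E] [TopologicalSpace H]
  {I : ModelWithCorners ℝ E H} {X : Type*} [TopologicalSpace X] [ChartedSpace H X]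
  {F : Type*} [NormedAddCommGroup F] [InnerProductSpace ℝ F]

section Inner

variable {f g : X → F} {z : X}

theorem HasMFDerivAt.inner {f' g' : TangentSpace I z →L[ℝ] F}
    (hf : HasMFDerivAt I 𝓘(ℝ, F) f z f') (hg : HasMFDerivAt I 𝓘(ℝ, F) g z g') :
    HasMFDerivAt I 𝓘(ℝ, ℝ) (fun y => ⟪f y, g y⟫) z
      ((fderivInnerCLM ℝ (f z, g z)).comp (f'.prod g')) := by
  have hB : HasFDerivAt (fun q : F × F => ⟪q.1, q.2⟫) (fderivInnerCLM ℝ (f z, g z))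
      (f z, g z) := by
    simpa using (hasFDerivAt_fst (p := (f z, g z))).inner ℝ hasFDerivAt_snd
  have hfg : HasMFDerivAt I 𝓘(ℝ, F × F) (fun y => (f y, g y)) z (f'.prod g') :=
    ⟨hf.1.prodMk hg.1, hf.2.prodMk hg.2⟩
  exact hB.hasMFDerivAt.comp z hfg

theorem MDifferentiableAt.inner (hf : MDifferentiableAt I 𝓘(ℝ, F) f z)
    (hg : MDifferentiableAt I 𝓘(ℝ, F) g z) :
    MDifferentiableAt I 𝓘(ℝ, ℝ) (fun y => ⟪f y, g y⟫) z :=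
  (hf.hasMFDerivAt.inner hg.hasMFDerivAt).mdifferentiableAt

theorem hasMFDerivAt_inner_zero_of_eq_zero (hf : MDifferentiableAt I 𝓘(ℝ, F) f z)
    (hg : MDifferentiableAt I 𝓘(ℝ, F) g z) (hf0 : f z = 0) (hg0 : g z = 0) :
    HasMFDerivAt I 𝓘(ℝ, ℝ) (fun y => ⟪f y, g y⟫) z 0 := by
  have hzero : fderivInnerCLM ℝ (f z, g z) = 0 :=
    ContinuousLinearMap.ext fun v => by simp [fderivInnerCLM_apply, hf0, hg0]
  have h := hf.hasMFDerivAt.inner hg.hasMFDerivAt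
  rw [hzero, ContinuousLinearMap.zero_comp] at h
  exact h

end Inner

theorem isMCriticalPt_of_hasMFDerivAt_zero {g : X → ℝ} {V : Set X} {z : X}
    (hg : HasMFDerivAt I 𝓘(ℝ, ℝ) g z 0) : IsMCriticalPt I g V z := by
  intro ξ _
  rw [hg.mfderiv]
  rfl

theorem IsMCriticalPt.deriv_comp_nonpos {g : X → ℝ} {V : Set X} {γ : ℝ → X}
    (hcrit : IsMCriticalPt I g V (γ 0)) (hg : MDifferentiableAt I 𝓘(ℝ, ℝ) g (γ 0))
    (hγ : ContMDiff 𝓘(ℝ, ℝ) I 1 γ) (hγV : ∃ ε > 0, ∀ t ∈ Set.Icc (0 : ℝ) ε, γ t ∈ V) :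
    deriv (g ∘ γ) 0 ≤ 0 := by
  have hchain := mfderiv_comp_apply 0 hg (hγ.mdifferentiableAt one_ne_zero) 1
  rw [mfderiv_eq_fderiv] at hchain
  exact le_of_eq_of_le (α := ℝ) hchain (hcrit _ (subset_closure ⟨γ, rfl, hγ, hγV, rfl⟩))

theorem IsMCriticalPt.isMaxOn_inner {K : Set F} (hK : Convex ℝ K) {S : Set X} {φ : X → F}
    {a : ℝ} {p : F} {x : X} (hφ : MDifferentiableAt I 𝓘(ℝ, F) φ x) (hz : (p, x) ∈ K ×ˢ S)
    (hcrit : IsMCriticalPt (𝓘(ℝ, F).prod I) (fun w : F × X => a + ⟪w.1, φ w.2⟫) (K ×ˢ S)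
      (p, x)) :
    IsMaxOn (fun q => ⟪q, φ x⟫) K p := by
  intro q hq
  let γ : ℝ → F × X := fun t => (p + t • (q - p), x)
  have hγ0 : γ 0 = (p, x) := by simp [γ]
  have hγ : ContMDiff 𝓘(ℝ, ℝ) (𝓘(ℝ, F).prod I) 1 γ :=
    (contDiff_const.add (contDiff_id.smul contDiff_const)).contMDiff.prodMk contMDiff_const
  have hγV : ∀ t ∈ Set.Icc (0 : ℝ) 1, γ t ∈ K ×ˢ S :=
    fun t ht => ⟨hK.add_smul_sub_mem hz.1 hq ht, hz.2⟩
  have hg : MDifferentiableAt (𝓘(ℝ, F).prod I) 𝓘(ℝ, ℝ)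
      (fun w : F × X => a + ⟪w.1, φ w.2⟫) (γ 0) :=
    hγ0 ▸ mdifferentiableAt_const.add
      (mdifferentiableAt_fst.inner (hφ.comp _ mdifferentiableAt_snd))
  have hderiv : HasDerivAt ((fun w : F × X => a + ⟪w.1, φ w.2⟫) ∘ γ) ⟪q - p, φ x⟫ 0 := by
    have hline : HasDerivAt (fun t : ℝ => a + (⟪p, φ x⟫ + t * ⟪q - p, φ x⟫)) ⟪q - p, φ x⟫ 0 :=
      (((hasDerivAt_id 0).mul_const _).const_add _).const_add _ |>.congr_deriv (one_mul _)
    convert hline using 2 with t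
    simp [γ, inner_add_left, real_inner_smul_left]
  have hnonpos := (hγ0 ▸ hcrit).deriv_comp_nonpos hg hγ ⟨1, one_pos, hγV⟩
  rw [hderiv.deriv, inner_sub_left] at hnonpos
  exact sub_nonpos.mp hnonpos

theorem norm_le_inner_of_isMaxOn_closedBall {v p : F}
    (hp : IsMaxOn (fun q => ⟪q, v⟫) (Metric.closedBall 0 1) p) : ‖v‖ ≤ ⟪p, v⟫ := by
  have hunit : ‖v‖⁻¹ • v ∈ Metric.closedBall (0 : F) 1 := by
    rw [mem_closedBall_zero_iff, norm_smul, norm_inv, norm_norm]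
    exact inv_mul_le_one
  calc ‖v‖ = ⟪‖v‖⁻¹ • v, v⟫ := by
        rw [real_inner_smul_left, real_inner_self_eq_norm_sq]
        rcases eq_or_ne ‖v‖ 0 with h | h
        · simp [h]
        · field_simp
    _ ≤ ⟪p, v⟫ := hp hunit

theorem IsMCriticalPt.norm_le_inner {S : Set X} {φ : X → F} {a : ℝ} {z : F × X}
    (hφ : MDifferentiableAt I 𝓘(ℝ, F) φ z.2) (hz : z ∈ Metric.closedBall 0 1 ×ˢ S)
    (hcrit : IsMCriticalPt (𝓘(ℝ, F).prod I) (fun w : F × X => a + ⟪w.1, φ w.2⟫)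
      (Metric.closedBall 0 1 ×ˢ S) z) :
    ‖φ z.2‖ ≤ ⟪z.1, φ z.2⟫ :=
  norm_le_inner_of_isMaxOn_closedBall (hcrit.isMaxOn_inner (convex_closedBall 0 1) hφ hz)

end

theorem statement13_general {k m : ℕ} {M : Type*} [TopologicalSpace M]
    [ChartedSpace (EuclideanSpace ℝ (Fin m)) M]
    (φ : M → EuclideanSpace ℝ (Fin (k+1)))
    (hφ : ContMDiff (𝓡 m) 𝓘(ℝ, EuclideanSpace ℝ (Fin (k+1))) 1 φ)
    (W : Set (EuclideanSpace ℝ (Fin (k+1)) × M))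
    (hW : W = (Metric.closedBall (0 : EuclideanSpace ℝ (Fin (k+1))) 1) ×ˢ Set.univ) :
    ((∃ z ∈ W, ⟪z.1, φ z.2⟫ = 0 ∧
        IsMCriticalPt (𝓘(ℝ, EuclideanSpace ℝ (Fin (k+1))).prod (𝓡 m))
          (fun w : EuclideanSpace ℝ (Fin (k+1)) × M => (⟪w.1, φ w.2⟫ : ℝ)) W z) ↔
      (∃ x : M, φ x = 0)) ∧
    (∀ c : ℝ, 0 < c → ∀ z ∈ W, c + ⟪z.1, φ z.2⟫ = 0 →
      ¬ IsMCriticalPt (𝓘(ℝ, EuclideanSpace ℝ (Fin (k+1))).prod (𝓡 m))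
          (fun w : EuclideanSpace ℝ (Fin (k+1)) × M => (c + ⟪w.1, φ w.2⟫ : ℝ)) W z) := by
  subst hW
  have hφx (x : M) : MDifferentiableAt (𝓡 m) 𝓘(ℝ, _) φ x := hφ.mdifferentiableAt one_ne_zero
  refine ⟨⟨?_, ?_⟩, ?_⟩
  · rintro ⟨z, hz, hlevel, hcrit⟩
    replace hcrit : IsMCriticalPt (𝓘(ℝ, EuclideanSpace ℝ (Fin (k+1))).prod (𝓡 m))
        (fun w : EuclideanSpace ℝ (Fin (k+1)) × M => 0 + ⟪w.1, φ w.2⟫)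
        (Metric.closedBall 0 1 ×ˢ Set.univ) z := by
      simpa only [zero_add] using hcrit
    exact ⟨z.2, norm_le_zero_iff.mp (hlevel ▸ hcrit.norm_le_inner (hφx z.2) hz)⟩
  · rintro ⟨x, hx⟩
    refine ⟨(0, x), ⟨Metric.mem_closedBall_self zero_le_one, trivial⟩, inner_zero_left _,
      isMCriticalPt_of_hasMFDerivAt_zero ?_⟩
    exact hasMFDerivAt_inner_zero_of_eq_zero mdifferentiableAt_fst
      ((hφx x).comp _ mdifferentiableAt_snd) rfl hx
  · intro c hc z hz hlevel hcrit
    have := hcrit.norm_le_inner (hφx z.2) hz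
    linarith [norm_nonneg (φ z.2)]

/-- for a `C¹` map `φ : M → ℝ^{k+1}` and `g(p,x) = ⟨p, φ(x)⟩` on
`B^{k+1} × M` (`B^{k+1}` the closed unit ball), `g` has a critical point (in the tangent-cone
sense) at level `0` iff `φ⁻¹(0) ≠ ∅`; moreover for every `c > 0` the function
`(p,x) ↦ c + ⟨p, φ(x)⟩` has no critical point at level `0`. -/
theorem statement13 {k m : ℕ} {M : Type*} [TopologicalSpace M]
    [ChartedSpace (EuclideanSpace ℝ (Fin m)) M]
    [IsManifold (𝓡 m) (⊤ : ℕ∞) M] [CompactSpace M]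
    (φ : M → EuclideanSpace ℝ (Fin (k+1)))
    (hφ : ContMDiff (𝓡 m) 𝓘(ℝ, EuclideanSpace ℝ (Fin (k+1))) 1 φ)
    (W : Set (EuclideanSpace ℝ (Fin (k+1)) × M))
    (hW : W = (Metric.closedBall (0 : EuclideanSpace ℝ (Fin (k+1))) 1) ×ˢ Set.univ) :
    ((∃ z ∈ W, ⟪z.1, φ z.2⟫ = 0 ∧
        IsMCriticalPt (𝓘(ℝ, EuclideanSpace ℝ (Fin (k+1))).prod (𝓡 m))
          (fun w : EuclideanSpace ℝ (Fin (k+1)) × M => (⟪w.1, φ w.2⟫ : ℝ)) W z) ↔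
      (∃ x : M, φ x = 0)) ∧
    (∀ c : ℝ, 0 < c → ∀ z ∈ W, c + ⟪z.1, φ z.2⟫ = 0 →
      ¬ IsMCriticalPt (𝓘(ℝ, EuclideanSpace ℝ (Fin (k+1))).prod (𝓡 m))
          (fun w : EuclideanSpace ℝ (Fin (k+1)) × M => (c + ⟪w.1, φ w.2⟫ : ℝ)) W z) :=
  statement13_general φ hφ W hW
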